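/- In the binary logit model with duration dependence, let μ be a probability measure on ℝ and p* : ℝ → [0,1] a measurable function giving the probability given α of the initial condition (y1 = 0) (so 1 − p*(α) is the probability of (y1 = 1, initial duration 1)). Define the four-period history probabilities P_{y1,y2,y3,y4} by integrating over μ the conditional history probabilities of the duration-dependent model, and define AME_{0→1} = ∫ (Λ(α+β1) − Λ(α)) dμ(α). Then: AME_{0→1} = ((e^{β1}−1)/2)·(P_{0,0,1,0} + P_{0,1,0,0}) + ((e^{β1}−1)/e^{β1})·P_{0,0,1,1} + (e^{β1}−1)·(P_{1,0,1,0} + P_{1,0,1,1}). (Proposition 5, equation (45).) -/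

import Mathlib

/-!
The odds of `Λ(α + β₁)` are `e^{β₁}` times the odds of `Λ(α)`, which gives
`Λ(α + β₁) − Λ(α) = (e^{β₁} − 1) Λ(α) (1 − Λ(α + β₁))`. By the same odds relation the three
weighted conditional probabilities of histories starting at 0 sum to `p*(α)` times this quantity,
and the two of histories starting at 1 sum to `(1 − p*(α))` times it. So the identity holds
pointwise in `α` before integrating against `μ`.
-/

open MeasureTheory

/-- The logistic function `Λ(u) = e^u / (1 + e^u)`. -/
noncomputable def logistic (u : ℝ) : ℝ := Real.exp u / (1 + Real.exp u)

open unitInterval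

lemma logistic_mem_unitInterval (u : ℝ) : logistic u ∈ I := by
  have := Real.exp_pos u
  exact ⟨by unfold logistic; positivity, div_le_one_of_le₀ (by linarith) (by positivity)⟩

lemma one_sub_logistic_mem_unitInterval (u : ℝ) : 1 - logistic u ∈ I :=
  Set.Icc.mem_iff_one_sub_mem.mp (logistic_mem_unitInterval u)

@[fun_prop]
lemma measurable_logistic : Measurable logistic := by
  unfold logistic
  fun_prop (disch := intro x; positivity)

lemma integrable_of_forall_mem_unitInterval {α : Type*} [MeasurableSpace α] {μ : Measure α}
    [IsFiniteMeasure μ] {f : α → ℝ} (hf : Measurable f) (hI : ∀ x, f x ∈ I) :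
    Integrable f μ :=
  .of_bound hf.aestronglyMeasurable 1 <| ae_of_all _ fun x => by
    rw [Real.norm_of_nonneg (hI x).1]; exact (hI x).2

lemma logistic_add_sub_logistic (u b : ℝ) :
    logistic (u + b) - logistic u = (Real.exp b - 1) * logistic u * (1 - logistic (u + b)) := by
  unfold logistic
  rw [Real.exp_add]
  have := Real.exp_pos u
  have := Real.exp_pos b
  field_simp
  ring

lemma one_sub_logistic_mul_logistic_add_div_exp (u b : ℝ) :
    (1 - logistic u) * logistic (u + b) / Real.exp b = logistic u * (1 - logistic (u + b)) := by
  unfold logistic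
  rw [Real.exp_add]
  have := Real.exp_pos u
  have := Real.exp_pos b
  field_simp
  ring

lemma logistic_add_sub_logistic_eq_history_combination (β1 α p : ℝ) :
    logistic (α + β1) - logistic α
      = ((Real.exp β1 - 1) / 2)
          * (p * (1 - logistic α) * logistic α * (1 - logistic (α + β1))
              + p * logistic α * (1 - logistic (α + β1)) * (1 - logistic α))
        + ((Real.exp β1 - 1) / Real.exp β1)
          * (p * (1 - logistic α) * logistic α * logistic (α + β1))
        + (Real.exp β1 - 1)
          * ((1 - p) * (1 - logistic (α + β1)) * logistic α * (1 - logistic (α + β1))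
              + (1 - p) * (1 - logistic (α + β1)) * logistic α * logistic (α + β1)) := by
  rw [logistic_add_sub_logistic]
  linear_combination (-(Real.exp β1 - 1) * p * logistic α) *
    one_sub_logistic_mul_logistic_add_div_exp α β1

/-- Proposition 5 (equation (45)): in the binary logit model with duration
dependence (probability of choosing 1 is `Λ(α)` after lagged choice 0 and
`Λ(α + β(d))` after lagged choice 1 with duration `d`; `β₁ = β(1)`; initial
duration 1 when `y₁ = 1`), the average marginal effect of a change in
duration from 0 to 1, `AME_{0→1} = ∫ (Λ(α+β₁) − Λ(α)) dμ(α)`, satisfies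
`AME_{0→1} = ((e^{β₁}−1)/2)(P_{0,0,1,0} + P_{0,1,0,0})
  + ((e^{β₁}−1)/e^{β₁}) P_{0,0,1,1} + (e^{β₁}−1)(P_{1,0,1,0} + P_{1,0,1,1})`,
where `p*(α)` is the probability of the initial condition `y₁ = 0` and the
`P`'s are the four-period history probabilities. -/
theorem prop5_AME_0_to_1 (β1 : ℝ) (μ : Measure ℝ) [IsProbabilityMeasure μ]
    (pstar : ℝ → ℝ) (hmeas : Measurable pstar)
    (h0 : ∀ α, 0 ≤ pstar α) (h1 : ∀ α, pstar α ≤ 1) :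
    (∫ α, (logistic (α + β1) - logistic α) ∂μ)
      = ((Real.exp β1 - 1) / 2)
          * ((∫ α, pstar α * (1 - logistic α) * logistic α * (1 - logistic (α + β1)) ∂μ)
              + ∫ α, pstar α * logistic α * (1 - logistic (α + β1)) * (1 - logistic α) ∂μ)
        + ((Real.exp β1 - 1) / Real.exp β1)
          * (∫ α, pstar α * (1 - logistic α) * logistic α * logistic (α + β1) ∂μ)
        + (Real.exp β1 - 1)
          * ((∫ α, (1 - pstar α) * (1 - logistic (α + β1)) * logistic α * (1 - logistic (α + β1)) ∂μ)
              + ∫ α, (1 - pstar α) * (1 - logistic (α + β1)) * logistic α * logistic (α + β1) ∂μ) := by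
  have hp (α : ℝ) : pstar α ∈ I := ⟨h0 α, h1 α⟩
  have hq (α : ℝ) : 1 - pstar α ∈ I := Set.Icc.mem_iff_one_sub_mem.mp (hp α)
  rw [integral_congr_ae (ae_of_all μ fun α =>
      logistic_add_sub_logistic_eq_history_combination β1 α (pstar α)),
    integral_add, integral_add, integral_const_mul, integral_const_mul, integral_const_mul,
    integral_add, integral_add]
  all_goals repeat' first | apply Integrable.add | apply Integrable.const_mul
  all_goals
    refine integrable_of_forall_mem_unitInterval (by fun_prop) fun α => ?_
    apply_rules [logistic_mem_unitInterval, one_sub_logistic_mem_unitInterval,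
      unitInterval.mul_mem]
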